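/- (Theorem 1.) Let m, d ≥ 1 be integers, ε > 0 and δ ∈ (0,1). Let γ_d = Measure.pi (fun i : Fin d => gaussianReal 0 1) and set p = γ_d {g | (∑ i, (g i)²)^{1/2} ≥ ε}; assume 0 < p < 1 and (m : ℝ) > log δ / log p. Let μ = Measure.pi (fun s : Fin m => Measure.pi (fun i : Fin d => gaussianReal 0 (1/m))) be the law of the hidden-layer weight matrix W¹ with i.i.d. N(0, 1/m) entries. Then with μ-probability greater than 1 − δ over W¹, there exists a row index j : Fin m such that for every output-weight vector w² : Fin m → ℝ with all entries in {−1, 1} and every x : Fin d → ℝ with ‖x‖₂ ≤ 1, one has |∑ s, w² s · max 0 ((W¹ ⬝ x) s) − ∑ s, w² s · max 0 ((Bⱼ W¹ ⬝ x) s)| < ε, where Bⱼ W¹ is W¹ with its j-th row replaced by zeros. -/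

import Mathlib

/-!
Deleting hidden neuron `j` changes the network output by `w² j · σ(⟨W¹ j, x⟩)`, which for
`|w² j| = 1` and `‖x‖₂ ≤ 1` is at most `‖W¹ j‖₂` by Cauchy–Schwarz. So it suffices that some row
of `W¹` has norm below `ε`. A row is `1/√m` times a standard Gaussian vector and `m ≥ 1`, so each
row independently has norm at least `ε` with probability at most `p`, and all `m` rows do with
probability at most `pᵐ < δ`.
-/

open Finset MeasureTheory ProbabilityTheory

variable {ι κ : Type*} [Fintype ι] [Fintype κ]

lemma sqrt_sum_sq_const_mul (c : ℝ) (g : κ → ℝ) :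
    √(∑ i, (c * g i) ^ 2) = |c| * √(∑ i, g i ^ 2) := by
  simp_rw [mul_pow, ← Finset.mul_sum, Real.sqrt_mul (sq_nonneg c), Real.sqrt_sq_eq_abs]

lemma pi_gaussianReal_eq_map_const_mul (v : NNReal) :
    Measure.pi (fun _ : κ => gaussianReal 0 v) =
      (Measure.pi fun _ : κ => gaussianReal 0 1).map (fun g i => √v * g i) := by
  have hmap : (gaussianReal 0 1).map (√v * ·) = gaussianReal 0 v := by
    rw [gaussianReal_map_const_mul, mul_zero, mul_one]
    congr
    exact Real.sq_sqrt v.coe_nonneg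
  have : ∀ _ : κ, SigmaFinite ((gaussianReal 0 1).map (√v * ·)) := by
    rw [hmap]; infer_instance
  rw [Measure.pi_map_pi fun _ => (measurable_const_mul _).aemeasurable, hmap]

lemma pi_gaussianReal_norm_tail_le_of_le_one {v : NNReal} (hv : v ≤ 1) (ε : ℝ) :
    (Measure.pi fun _ : κ => gaussianReal 0 v) {g | ε ≤ √(∑ i, g i ^ 2)} ≤
      (Measure.pi fun _ : κ => gaussianReal 0 1) {g | ε ≤ √(∑ i, g i ^ 2)} := by
  have hmeas : MeasurableSet {g : κ → ℝ | ε ≤ √(∑ i, g i ^ 2)} :=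
    measurableSet_le measurable_const (by fun_prop)
  rw [pi_gaussianReal_eq_map_const_mul, Measure.map_apply (by fun_prop) hmeas]
  refine measure_mono fun g hg => ?_
  have hc : |√(v : ℝ)| ≤ 1 := by
    rw [abs_of_nonneg (Real.sqrt_nonneg _), Real.sqrt_le_one]; exact_mod_cast hv
  simp only [Set.mem_preimage, Set.mem_ofPred_eq, sqrt_sum_sq_const_mul] at hg ⊢
  exact hg.trans (mul_le_of_le_one_left (Real.sqrt_nonneg _) hc)

lemma pi_exists_mem_eq_one_sub_pow {α : Type*} [MeasurableSpace α] (ν : Measure α)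
    [IsProbabilityMeasure ν] {T : Set α} (hT : MeasurableSet T) :
    (Measure.pi fun _ : ι => ν) {W | ∃ j, W j ∈ T} = 1 - ν Tᶜ ^ Fintype.card ι := by
  have hcompl : {W : ι → α | ∃ j, W j ∈ T} = (Set.univ.pi fun _ => Tᶜ)ᶜ := by
    ext W; simp
  rw [hcompl, prob_compl_eq_one_sub (.univ_pi fun _ => hT.compl), Measure.pi_pi,
    Finset.prod_const, Finset.card_univ]

lemma pow_lt_of_log_div_log_lt {p δ : ℝ} {n : ℕ} (hp0 : 0 < p) (hp1 : p < 1) (hδ : 0 < δ)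
    (hn : Real.log δ / Real.log p < n) : p ^ n < δ := by
  rw [div_lt_iff_of_neg (Real.log_neg hp0 hp1), ← Real.log_pow] at hn
  exact (Real.log_lt_log_iff (pow_pos hp0 n) hδ).1 hn

lemma max_zero_sum_mul_le (a x : κ → ℝ) :
    max 0 (∑ i, a i * x i) ≤ √(∑ i, a i ^ 2) * √(∑ i, x i ^ 2) :=
  max_le (by positivity) (Real.sum_mul_le_sqrt_mul_sqrt _ a x)

variable [DecidableEq ι]

lemma sum_relu_sub_sum_relu_zero_row (W : ι → κ → ℝ) (w : ι → ℝ) (x : κ → ℝ) (j : ι) :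
    (∑ s, w s * max 0 (∑ i, W s i * x i)) -
        ∑ s, w s * max 0 (∑ i, (if s = j then 0 else W s i) * x i) =
      w j * max 0 (∑ i, W j i * x i) := by
  rw [← Finset.sum_sub_distrib, Finset.sum_eq_single j (fun s _ hs => by simp [hs]) (by simp)]
  simp

lemma abs_sum_relu_sub_sum_relu_zero_row_lt {W : ι → κ → ℝ} {w : ι → ℝ} {x : κ → ℝ} {j : ι}
    {ε : ℝ} (hw : |w j| ≤ 1) (hx : √(∑ i, x i ^ 2) ≤ 1) (hj : √(∑ i, W j i ^ 2) < ε) :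
    |(∑ s, w s * max 0 (∑ i, W s i * x i)) -
        ∑ s, w s * max 0 (∑ i, (if s = j then 0 else W s i) * x i)| < ε := by
  rw [sum_relu_sub_sum_relu_zero_row, abs_mul, abs_of_nonneg (le_max_left 0 (∑ i, W j i * x i))]
  calc |w j| * max 0 (∑ i, W j i * x i)
      ≤ 1 * (√(∑ i, W j i ^ 2) * 1) := by
        gcongr
        exact (max_zero_sum_mul_le _ x).trans (by gcongr)
    _ < ε := by simpa using hj

theorem lottery_ticket_one_hidden_layer_general
    (m d : ℕ) (hm : 1 ≤ m) (ε δ : ℝ)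
    (hδ : δ ∈ Set.Ioo (0 : ℝ) 1) (p : ℝ)
    (hp_def : p = ((Measure.pi fun _ : Fin d => gaussianReal 0 1)
        {g : Fin d → ℝ | Real.sqrt (∑ i, (g i) ^ 2) ≥ ε}).toReal)
    (hp0 : 0 < p) (hp1 : p < 1)
    (hm' : (m : ℝ) > Real.log δ / Real.log p) :
    (Measure.pi fun _ : Fin m => Measure.pi fun _ : Fin d =>
        gaussianReal 0 (1 / (m : NNReal)))
      {W1 : Fin m → Fin d → ℝ |
        ∃ j : Fin m, ∀ w2 : Fin m → ℝ, (∀ s, w2 s = 1 ∨ w2 s = -1) →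
          ∀ x : Fin d → ℝ, Real.sqrt (∑ i, (x i) ^ 2) ≤ 1 →
            |(∑ s, w2 s * max 0 (∑ i, W1 s i * x i)) -
              ∑ s, w2 s * max 0 (∑ i, (if s = j then 0 else W1 s i) * x i)| < ε}
    > ENNReal.ofReal (1 - δ) := by
  set T : Set (Fin d → ℝ) := {r | √(∑ i, r i ^ 2) < ε}
  have hT : MeasurableSet T := measurableSet_lt (by fun_prop) measurable_const
  have hvar : 1 / (m : NNReal) ≤ 1 := div_le_one_of_le₀ (by exact_mod_cast hm) (by positivity)
  set ν : Measure (Fin d → ℝ) := Measure.pi fun _ => gaussianReal 0 (1 / (m : NNReal))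
  have hrow : ν Tᶜ ≤ ENNReal.ofReal p := by
    have hTc : Tᶜ = {r | ε ≤ √(∑ i, r i ^ 2)} := by ext; simp [T]
    rw [hTc, hp_def, ENNReal.ofReal_toReal (measure_ne_top _ _)]
    exact pi_gaussianReal_norm_tail_le_of_le_one hvar ε
  have hpm : p ^ m < δ := pow_lt_of_log_div_log_lt hp0 hp1 hδ.1 hm'
  have hpm_one : p ^ m < 1 := pow_lt_one₀ hp0.le hp1 (by omega)
  calc ENNReal.ofReal (1 - δ) < ENNReal.ofReal (1 - p ^ m) :=
        (ENNReal.ofReal_lt_ofReal_iff (sub_pos.2 hpm_one)).2 (by linarith)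
    _ = 1 - ENNReal.ofReal p ^ m := by
        rw [ENNReal.ofReal_sub _ (by positivity), ENNReal.ofReal_one, ENNReal.ofReal_pow hp0.le]
    _ ≤ 1 - ν Tᶜ ^ m := by gcongr
    _ = Measure.pi (fun _ : Fin m => ν) {W | ∃ j, W j ∈ T} := by
        rw [pi_exists_mem_eq_one_sub_pow _ hT, Fintype.card_fin]
    _ ≤ _ := by
        refine measure_mono fun W ⟨j, hj⟩ => ⟨j, fun w2 hw2 x hx => ?_⟩
        exact abs_sum_relu_sub_sum_relu_zero_row_lt
          (by rcases hw2 j with h | h <;> simp [h]) hx hj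

/-- Theorem 1: with probability greater than `1 - δ` over the hidden-layer
weights `W¹` with i.i.d. `N(0, 1/m)` entries, there is a hidden neuron `j`
whose removal changes the output of the 1-hidden-layer ReLU network by less
than `ε`, for every choice of `±1` output weights and every input of Euclidean
norm at most `1`. -/
theorem lottery_ticket_one_hidden_layer
    (m d : ℕ) (hm : 1 ≤ m) (hd : 1 ≤ d) (ε δ : ℝ) (hε : 0 < ε)
    (hδ : δ ∈ Set.Ioo (0 : ℝ) 1) (p : ℝ)
    (hp_def : p = ((Measure.pi fun _ : Fin d => gaussianReal 0 1)
        {g : Fin d → ℝ | Real.sqrt (∑ i, (g i) ^ 2) ≥ ε}).toReal)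
    (hp0 : 0 < p) (hp1 : p < 1)
    (hm' : (m : ℝ) > Real.log δ / Real.log p) :
    (Measure.pi fun _ : Fin m => Measure.pi fun _ : Fin d =>
        gaussianReal 0 (1 / (m : NNReal)))
      {W1 : Fin m → Fin d → ℝ |
        ∃ j : Fin m, ∀ w2 : Fin m → ℝ, (∀ s, w2 s = 1 ∨ w2 s = -1) →
          ∀ x : Fin d → ℝ, Real.sqrt (∑ i, (x i) ^ 2) ≤ 1 →
            |(∑ s, w2 s * max 0 (∑ i, W1 s i * x i)) -
              ∑ s, w2 s * max 0 (∑ i, (if s = j then 0 else W1 s i) * x i)| < ε}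
    > ENNReal.ofReal (1 - δ) :=
  lottery_ticket_one_hidden_layer_general m d hm ε δ hδ p hp_def hp0 hp1 hm'
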